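/- In the ReLU-network setting, the second moment of the gradient estimator is finite: for every θ ∈ Θ, E_z[‖∇_θ f(θ, z)‖²] < ∞, where ∇_θ f(θ, z) is the gradient of the loss with respect to all weights and biases for fixed input z (defined for a.e. z). -/

import Mathlib

/-!
Fix `θ`. By induction over the layers, uniformly for parameters in the unit ball around `θ`,
every layer is bounded by `A (1 + ‖z‖)` and is Lipschitz in the parameters with constant
`L (1 + ‖z‖)` (ReLU is 1-Lipschitz). Hence the loss is locally Lipschitz in `θ` with constant
`C (1 + ‖z‖) (1 + ‖z‖ + ‖f̂ z‖)`, which bounds `‖∇_θ f(θ, z)‖` (and `fderiv` is `0` where the loss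
is not differentiable). The square of this bound is integrable: Gaussian fourth moments control
`(1 + ‖z‖)⁴`, and the moment hypotheses on `f̂` control `‖f̂ z‖² (1 + ‖z‖²)`. Measurability of
`z ↦ ∇_θ f(θ, z)` follows from the joint continuity of `(z, y, θ) ↦ ‖x_n(θ, z) - y‖²`.
-/

open MeasureTheory
open scoped BigOperators

noncomputable section

/-- Parameter space of an `n`-layer fully connected network with layer widths `κ`:
for each layer `i` a weight matrix `W_i ∈ ℝ^{κ(i+1) × κ i}` and a bias `b_i ∈ ℝ^{κ(i+1)}`. -/
abbrev NNParams (κ : ℕ → ℕ) (n : ℕ) :=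
  (i : Fin n) → ((Fin (κ (i.1 + 1)) → Fin (κ i.1) → ℝ) × (Fin (κ (i.1 + 1)) → ℝ))

/-- The layers of the ReLU network: `x₀ = z`, `x_{i+1} = max(0, W_{i+1} x_i + b_{i+1})`
entrywise for the hidden layers `i + 1 ≤ n - 1`, and the affine output layer
`x_n = W_n x_{n-1} + b_n` (junk value `0` beyond layer `n`). -/
def reluNet (κ : ℕ → ℕ) (n : ℕ) (θ : NNParams κ n) (z : Fin (κ 0) → ℝ) :
    (i : ℕ) → Fin (κ i) → ℝ
  | 0 => z
  | (i + 1) =>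
    if h : i < n then
      fun j =>
        let pre := (∑ l, (θ ⟨i, h⟩).1 j l * reluNet κ n θ z i l) + (θ ⟨i, h⟩).2 j
        if i + 2 ≤ n then max 0 pre else pre
    else 0

/-- Squared-error loss `f(θ,z) = ‖x_n(θ,z) − f̂(z)‖²` of the ReLU network. -/
def reluLoss (κ : ℕ → ℕ) (n : ℕ) (fhat : (Fin (κ 0) → ℝ) → (Fin (κ n) → ℝ))
    (θ : NNParams κ n) (z : Fin (κ 0) → ℝ) : ℝ :=
  ∑ j, (reluNet κ n θ z n j - fhat z j) ^ 2

/-- The standard Gaussian measure on `ℝ^d` (i.i.d. `N(0,1)` coordinates). -/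
def stdGaussian (d : ℕ) : Measure (Fin d → ℝ) :=
  Measure.pi fun _ => ProbabilityTheory.gaussianReal 0 1

/-- `θ` gives a.e. nonzero hidden-layer preactivations: for a.e. input `z`, every
hidden-layer preactivation `W_i^j x_{i-1} + b_i^j` is nonzero (so that `∇_θ f(θ,z)`
exists for a.e. `z`). -/
def NonzeroPreact (κ : ℕ → ℕ) (n : ℕ) (θ : NNParams κ n) : Prop :=
  ∀ᵐ z ∂(stdGaussian (κ 0)), ∀ (i : ℕ) (h : i < n), i + 2 ≤ n →
    ∀ j : Fin (κ (i + 1)),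
      (∑ l, (θ ⟨i, h⟩).1 j l * reluNet κ n θ z i l) + (θ ⟨i, h⟩).2 j ≠ 0

open scoped NNReal ENNReal

section Network

variable {κ : ℕ → ℕ} {n : ℕ}

def layerPreact (θ : NNParams κ n) (i : Fin n) (x : Fin (κ i) → ℝ) (j : Fin (κ (i + 1))) : ℝ :=
  ∑ l, (θ i).1 j l * x l + (θ i).2 j

lemma reluNet_succ_of_lt (θ : NNParams κ n) (z : Fin (κ 0) → ℝ) {i : ℕ} (h : i < n)
    (j : Fin (κ (i + 1))) :
    reluNet κ n θ z (i + 1) j =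
      if i + 2 ≤ n then max 0 (layerPreact θ ⟨i, h⟩ (reluNet κ n θ z i) j)
      else layerPreact θ ⟨i, h⟩ (reluNet κ n θ z i) j := by
  simp [reluNet, h, layerPreact]

lemma reluNet_succ_of_le (θ : NNParams κ n) (z : Fin (κ 0) → ℝ) {i : ℕ} (h : n ≤ i) :
    reluNet κ n θ z (i + 1) = 0 := by
  simp [reluNet, h.not_gt]

lemma norm_weight_row_le (θ : NNParams κ n) (i : Fin n) (j : Fin (κ (i + 1))) :
    ‖(θ i).1 j‖ ≤ ‖θ‖ :=
  calc ‖(θ i).1 j‖ ≤ ‖(θ i).1‖ := norm_le_pi_norm _ j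
    _ ≤ ‖θ i‖ := norm_fst_le _
    _ ≤ ‖θ‖ := norm_le_pi_norm _ i

lemma abs_bias_le (θ : NNParams κ n) (i : Fin n) (j : Fin (κ (i + 1))) :
    |(θ i).2 j| ≤ ‖θ‖ :=
  calc |(θ i).2 j| = ‖(θ i).2 j‖ := rfl
    _ ≤ ‖(θ i).2‖ := norm_le_pi_norm _ j
    _ ≤ ‖θ i‖ := norm_snd_le _
    _ ≤ ‖θ‖ := norm_le_pi_norm _ i

lemma abs_sum_mul_le {m : ℕ} (w x : Fin m → ℝ) : |∑ l, w l * x l| ≤ m * (‖w‖ * ‖x‖) :=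
  calc |∑ l, w l * x l| ≤ ∑ l, |w l * x l| := Finset.abs_sum_le_sum_abs _ _
    _ ≤ ∑ _l : Fin m, ‖w‖ * ‖x‖ := by
        gcongr with l
        rw [abs_mul]
        exact mul_le_mul (norm_le_pi_norm w l) (norm_le_pi_norm x l) (abs_nonneg _)
          (norm_nonneg _)
    _ = m * (‖w‖ * ‖x‖) := by simp

lemma abs_layerPreact_le (θ : NNParams κ n) (i : Fin n) (x : Fin (κ i) → ℝ)
    (j : Fin (κ (i + 1))) : |layerPreact θ i x j| ≤ ‖θ‖ * (κ i * ‖x‖ + 1) :=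
  calc |layerPreact θ i x j| ≤ |∑ l, (θ i).1 j l * x l| + |(θ i).2 j| := abs_add_le _ _
    _ ≤ κ i * (‖θ‖ * ‖x‖) + ‖θ‖ := by
        gcongr
        · exact (abs_sum_mul_le _ _).trans (by gcongr; exact norm_weight_row_le θ i j)
        · exact abs_bias_le θ i j
    _ = ‖θ‖ * (κ i * ‖x‖ + 1) := by ring

lemma abs_layerPreact_sub_le (θ₁ θ₂ : NNParams κ n) (i : Fin n) (x₁ x₂ : Fin (κ i) → ℝ)
    (j : Fin (κ (i + 1))) :
    |layerPreact θ₁ i x₁ j - layerPreact θ₂ i x₂ j| ≤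
      κ i * (‖θ₁‖ * ‖x₁ - x₂‖) + ‖θ₁ - θ₂‖ * (κ i * ‖x₂‖ + 1) := by
  have hsplit : layerPreact θ₁ i x₁ j - layerPreact θ₂ i x₂ j =
      ∑ l, (θ₁ i).1 j l * (x₁ - x₂) l + layerPreact (θ₁ - θ₂) i x₂ j := by
    simp only [layerPreact, Pi.sub_apply, Prod.fst_sub, Prod.snd_sub, sub_mul, mul_sub,
      Finset.sum_sub_distrib]
    ring
  rw [hsplit]
  refine (abs_add_le _ _).trans (add_le_add ?_ (abs_layerPreact_le _ i x₂ j))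
  exact (abs_sum_mul_le _ _).trans (by gcongr; exact norm_weight_row_le θ₁ i j)

lemma abs_ite_max_zero_sub_le (p : Prop) [Decidable p] (a b : ℝ) :
    |(if p then max 0 a else a) - (if p then max 0 b else b)| ≤ |a - b| := by
  split
  · rw [max_comm 0 a, max_comm 0 b]
    exact abs_max_sub_max_le_abs a b 0
  · exact le_rfl

lemma abs_ite_max_zero_le (p : Prop) [Decidable p] (a : ℝ) :
    |if p then max 0 a else a| ≤ |a| := by
  simpa using abs_ite_max_zero_sub_le p a 0


lemma norm_reluNet_le (R : ℝ≥0) (i : ℕ) :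
    ∃ A : ℝ, 0 ≤ A ∧ ∀ θ : NNParams κ n, ‖θ‖ ≤ R → ∀ z : Fin (κ 0) → ℝ,
      ‖reluNet κ n θ z i‖ ≤ A * (1 + ‖z‖) := by
  induction i with
  | zero => exact ⟨1, zero_le_one, fun θ _ z => by simp [reluNet]⟩
  | succ i ih =>
    obtain ⟨A, hA0, hA⟩ := ih
    refine ⟨R * (κ i * A + 1), by positivity, fun θ hθ z => ?_⟩
    rcases lt_or_ge i n with h | h
    · refine (pi_norm_le_iff_of_nonneg (by positivity)).2 fun j => ?_
      rw [Real.norm_eq_abs, reluNet_succ_of_lt θ z h]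
      calc _ ≤ |layerPreact θ ⟨i, h⟩ (reluNet κ n θ z i) j| := abs_ite_max_zero_le _ _
        _ ≤ ‖θ‖ * (κ i * ‖reluNet κ n θ z i‖ + 1) := abs_layerPreact_le _ _ _ _
        _ ≤ R * (κ i * (A * (1 + ‖z‖)) + 1 * (1 + ‖z‖)) := by
            gcongr
            · exact hA θ hθ z
            · simp
        _ = R * (κ i * A + 1) * (1 + ‖z‖) := by ring
    · rw [reluNet_succ_of_le θ z h, norm_zero]
      positivity

lemma norm_reluNet_sub_le (R : ℝ≥0) (i : ℕ) :
    ∃ L : ℝ, 0 ≤ L ∧ ∀ θ₁ θ₂ : NNParams κ n, ‖θ₁‖ ≤ R → ‖θ₂‖ ≤ R → ∀ z : Fin (κ 0) → ℝ,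
      ‖reluNet κ n θ₁ z i - reluNet κ n θ₂ z i‖ ≤ L * (1 + ‖z‖) * ‖θ₁ - θ₂‖ := by
  induction i with
  | zero => exact ⟨0, le_rfl, fun θ₁ θ₂ _ _ z => by simp [reluNet]⟩
  | succ i ih =>
    obtain ⟨L, hL0, hL⟩ := ih
    obtain ⟨A, hA0, hA⟩ := norm_reluNet_le (κ := κ) (n := n) R i
    refine ⟨κ i * (R * L + A) + 1, by positivity, fun θ₁ θ₂ hθ₁ hθ₂ z => ?_⟩
    rcases lt_or_ge i n with h | h
    · refine (pi_norm_le_iff_of_nonneg (by positivity)).2 fun j => ?_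
      rw [Real.norm_eq_abs, Pi.sub_apply, reluNet_succ_of_lt θ₁ z h, reluNet_succ_of_lt θ₂ z h]
      calc _ ≤ |layerPreact θ₁ ⟨i, h⟩ (reluNet κ n θ₁ z i) j -
              layerPreact θ₂ ⟨i, h⟩ (reluNet κ n θ₂ z i) j| := abs_ite_max_zero_sub_le _ _ _
        _ ≤ κ i * (‖θ₁‖ * ‖reluNet κ n θ₁ z i - reluNet κ n θ₂ z i‖) +
              ‖θ₁ - θ₂‖ * (κ i * ‖reluNet κ n θ₂ z i‖ + 1) := abs_layerPreact_sub_le _ _ _ _ _ _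
        _ ≤ κ i * (R * (L * (1 + ‖z‖) * ‖θ₁ - θ₂‖)) +
              ‖θ₁ - θ₂‖ * (κ i * (A * (1 + ‖z‖)) + 1 * (1 + ‖z‖)) := by
            gcongr
            exacts [hL θ₁ θ₂ hθ₁ hθ₂ z, hA θ₂ hθ₂ z, by simp]
        _ = (κ i * (R * L + A) + 1) * (1 + ‖z‖) * ‖θ₁ - θ₂‖ := by ring
    · rw [reluNet_succ_of_le θ₁ z h, reluNet_succ_of_le θ₂ z h, sub_zero, norm_zero]
      positivity

lemma continuous_reluNet (i : ℕ) :
    Continuous fun p : NNParams κ n × (Fin (κ 0) → ℝ) => reluNet κ n p.1 p.2 i := by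
  induction i with
  | zero => exact continuous_snd
  | succ i ih =>
    rcases lt_or_ge i n with h | h
    · refine continuous_pi fun j => ?_
      have hpre : Continuous fun p : NNParams κ n × (Fin (κ 0) → ℝ) =>
          layerPreact p.1 ⟨i, h⟩ (reluNet κ n p.1 p.2 i) j := by
        unfold layerPreact
        fun_prop
      simp only [reluNet_succ_of_lt _ _ h]
      split
      exacts [continuous_const.max hpre, hpre]
    · simp only [reluNet_succ_of_le _ _ h]
      exact continuous_const


lemma abs_sum_sq_sub_sub_sum_sq_sub_le {m : ℕ} (u v y : Fin m → ℝ) :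
    |∑ j, (u j - y j) ^ 2 - ∑ j, (v j - y j) ^ 2| ≤ m * (‖u - v‖ * (‖u‖ + ‖v‖ + 2 * ‖y‖)) := by
  have hfactor : ∑ j, (u j - y j) ^ 2 - ∑ j, (v j - y j) ^ 2 =
      ∑ j, (u - v) j * (u + v - (2 : ℝ) • y) j := by
    rw [← Finset.sum_sub_distrib]
    refine Finset.sum_congr rfl fun j _ => ?_
    simp only [Pi.sub_apply, Pi.add_apply, Pi.smul_apply, smul_eq_mul]
    ring
  have hnorm : ‖u + v - (2 : ℝ) • y‖ ≤ ‖u‖ + ‖v‖ + 2 * ‖y‖ :=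
    calc _ ≤ ‖u + v‖ + ‖(2 : ℝ) • y‖ := norm_sub_le _ _
      _ ≤ ‖u‖ + ‖v‖ + 2 * ‖y‖ := by
          rw [norm_smul, Real.norm_two]
          gcongr
          exact norm_add_le u v
  rw [hfactor]
  exact (abs_sum_mul_le _ _).trans (by gcongr)

lemma norm_fderiv_reluLoss_le (fhat : (Fin (κ 0) → ℝ) → (Fin (κ n) → ℝ)) (θ : NNParams κ n) :
    ∃ C : ℝ, ∀ z : Fin (κ 0) → ℝ, ‖fderiv ℝ (fun θ' => reluLoss κ n fhat θ' z) θ‖ ≤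
      C * (1 + ‖z‖) * (1 + ‖z‖ + ‖fhat z‖) := by
  obtain ⟨A, hA0, hA⟩ := norm_reluNet_le (κ := κ) (n := n) (‖θ‖₊ + 1) n
  obtain ⟨L, hL0, hL⟩ := norm_reluNet_sub_le (κ := κ) (n := n) (‖θ‖₊ + 1) n
  have hball : ∀ θ' ∈ Metric.closedBall θ 1, ‖θ'‖ ≤ ↑(‖θ‖₊ + 1) := fun θ' hθ' => by
    have := norm_le_norm_add_norm_sub' θ' θ
    push_cast
    linarith [mem_closedBall_iff_norm.1 hθ']
  have hθ := hball θ (Metric.mem_closedBall_self zero_le_one)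
  refine ⟨κ n * L * (2 * (A + 1)), fun z => norm_fderiv_le_of_lip' ℝ (by positivity) ?_⟩
  filter_upwards [Metric.closedBall_mem_nhds θ one_pos] with θ' hθ'
  have hgrowth : A * (1 + ‖z‖) + A * (1 + ‖z‖) + 2 * ‖fhat z‖ ≤
      2 * (A + 1) * (1 + ‖z‖ + ‖fhat z‖) := by
    nlinarith [norm_nonneg z, norm_nonneg (fhat z)]
  calc ‖reluLoss κ n fhat θ' z - reluLoss κ n fhat θ z‖
      ≤ κ n * (‖reluNet κ n θ' z n - reluNet κ n θ z n‖ *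
          (‖reluNet κ n θ' z n‖ + ‖reluNet κ n θ z n‖ + 2 * ‖fhat z‖)) :=
        abs_sum_sq_sub_sub_sum_sq_sub_le _ _ _
    _ ≤ κ n * (L * (1 + ‖z‖) * ‖θ' - θ‖ *
          (A * (1 + ‖z‖) + A * (1 + ‖z‖) + 2 * ‖fhat z‖)) := by
        gcongr
        exacts [hL θ' θ (hball θ' hθ') hθ z, hA θ' (hball θ' hθ') z, hA θ hθ z]
    _ ≤ κ n * (L * (1 + ‖z‖) * ‖θ' - θ‖ * (2 * (A + 1) * (1 + ‖z‖ + ‖fhat z‖))) := by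
        gcongr
    _ = κ n * L * (2 * (A + 1)) * (1 + ‖z‖) * (1 + ‖z‖ + ‖fhat z‖) * ‖θ' - θ‖ := by ring

lemma measurable_fderiv_reluLoss {fhat : (Fin (κ 0) → ℝ) → (Fin (κ n) → ℝ)}
    (hfhat : Measurable fhat) (θ : NNParams κ n) :
    Measurable fun z => fderiv ℝ (fun θ' => reluLoss κ n fhat θ' z) θ := by
  let F : (Fin (κ 0) → ℝ) × (Fin (κ n) → ℝ) → NNParams κ n → ℝ :=
    fun p θ' => ∑ j, (reluNet κ n θ' p.1 n j - p.2 j) ^ 2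
  have hF : Continuous F.uncurry := by
    have hnet : Continuous fun q : ((Fin (κ 0) → ℝ) × (Fin (κ n) → ℝ)) × NNParams κ n =>
        reluNet κ n q.2 q.1.1 n :=
      (continuous_reluNet n).comp (continuous_snd.prodMk (continuous_fst.comp continuous_fst))
    unfold F Function.uncurry
    fun_prop
  exact (measurable_fderiv_with_param ℝ hF).comp
    ((measurable_id.prodMk hfhat).prodMk measurable_const)

end Network

section Gaussian

instance (d : ℕ) : IsProbabilityMeasure (stdGaussian d) := by
  unfold stdGaussian
  infer_instance

lemma memLp_id_stdGaussian (d : ℕ) {p : ℝ≥0∞} (hp : p ≠ ∞) : MemLp id p (stdGaussian d) :=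
  memLp_pi_iff.2 fun k =>
    (memLp_map_measure_iff aestronglyMeasurable_id (measurable_pi_apply k).aemeasurable).1 <| by
      change MemLp id p ((stdGaussian d).map (Function.eval k))
      rw [stdGaussian, (measurePreserving_eval
        (μ := fun _ : Fin d => ProbabilityTheory.gaussianReal 0 1) k).map_eq]
      exact ProbabilityTheory.memLp_id_gaussianReal' p hp

lemma sq_norm_le_sum_sq {m : ℕ} (x : Fin m → ℝ) : ‖x‖ ^ 2 ≤ ∑ j, x j ^ 2 := by
  have hsum : 0 ≤ ∑ j, x j ^ 2 := by positivity
  have hx : ‖x‖ ≤ √(∑ j, x j ^ 2) :=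
    (pi_norm_le_iff_of_nonneg (Real.sqrt_nonneg _)).2 fun j => Real.abs_le_sqrt <|
      Finset.single_le_sum (f := fun j => x j ^ 2) (fun _ _ => sq_nonneg _) (Finset.mem_univ j)
  calc ‖x‖ ^ 2 ≤ √(∑ j, x j ^ 2) ^ 2 := by gcongr
    _ = ∑ j, x j ^ 2 := Real.sq_sqrt hsum

lemma sq_mul_one_add_mul_le (C a b : ℝ) :
    (C * (1 + a) * (1 + a + b)) ^ 2 ≤
      2 * C ^ 2 * (8 * (1 + a ^ 4) + 2 * (b ^ 2 + b ^ 2 * a ^ 2)) := by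
  have h2 : (1 + a) ^ 2 ≤ 2 * (1 + a ^ 2) := by nlinarith [sq_nonneg (a - 1)]
  have h4 : (1 + a) ^ 4 ≤ 8 * (1 + a ^ 4) := by nlinarith [sq_nonneg (a ^ 2 - 1)]
  calc (C * (1 + a) * (1 + a + b)) ^ 2 = C ^ 2 * ((1 + a) ^ 2 * (1 + a + b) ^ 2) := by ring
    _ ≤ C ^ 2 * (2 * (1 + a) ^ 4 + 2 * ((1 + a) ^ 2 * b ^ 2)) := by
        gcongr
        nlinarith [sq_nonneg ((1 + a) * (1 + a - b))]
    _ ≤ C ^ 2 * (2 * (8 * (1 + a ^ 4)) + 2 * ((2 * (1 + a ^ 2)) * b ^ 2)) := by gcongr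
    _ = 2 * C ^ 2 * (8 * (1 + a ^ 4) + 2 * (b ^ 2 + b ^ 2 * a ^ 2)) := by ring

lemma integrable_sq_stdGaussian_of_abs_le {d m : ℕ} {g : (Fin d → ℝ) → ℝ}
    (hg : AEStronglyMeasurable g (stdGaussian d)) {y : (Fin d → ℝ) → Fin m → ℝ}
    (hy0 : Integrable (fun z => ∑ j, y z j ^ 2) (stdGaussian d))
    (hy2 : ∀ k : Fin d, Integrable (fun z => (∑ j, y z j ^ 2) * |z k| ^ 2) (stdGaussian d))
    (C : ℝ) (hgC : ∀ z, |g z| ≤ C * (1 + ‖z‖) * (1 + ‖z‖ + ‖y z‖)) :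
    Integrable (fun z => g z ^ 2) (stdGaussian d) := by
  have h4 : Integrable (fun z : Fin d → ℝ => ‖z‖ ^ 4) (stdGaussian d) :=
    (memLp_id_stdGaussian d (p := (4 : ℕ)) (by simp)).integrable_norm_pow'
  have hmaj : Integrable (fun z => 2 * C ^ 2 * (8 * (1 + ‖z‖ ^ 4) +
      2 * (∑ j, y z j ^ 2 + ∑ k, (∑ j, y z j ^ 2) * |z k| ^ 2))) (stdGaussian d) :=
    ((((integrable_const 1).add h4).const_mul 8).add
      ((hy0.add (integrable_finsetSum _ fun k _ => hy2 k)).const_mul 2)).const_mul _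
  refine hmaj.mono' (hg.pow 2) (ae_of_all _ fun z => ?_)
  have hz : ‖z‖ ^ 2 ≤ ∑ k, |z k| ^ 2 := by simpa only [sq_abs] using sq_norm_le_sum_sq z
  calc ‖g z ^ 2‖ = |g z| ^ 2 := by rw [Real.norm_eq_abs, abs_pow]
    _ ≤ (C * (1 + ‖z‖) * (1 + ‖z‖ + ‖y z‖)) ^ 2 := by gcongr; exact hgC z
    _ ≤ 2 * C ^ 2 * (8 * (1 + ‖z‖ ^ 4) + 2 * (‖y z‖ ^ 2 + ‖y z‖ ^ 2 * ‖z‖ ^ 2)) :=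
        sq_mul_one_add_mul_le _ _ _
    _ ≤ 2 * C ^ 2 * (8 * (1 + ‖z‖ ^ 4) +
          2 * (∑ j, y z j ^ 2 + ∑ k, (∑ j, y z j ^ 2) * |z k| ^ 2)) := by
        rw [← Finset.mul_sum]
        gcongr
        all_goals exact sq_norm_le_sum_sq (y z)

end Gaussian

theorem stmt_12_general (κ : ℕ → ℕ) (n : ℕ)
    (fhat : (Fin (κ 0) → ℝ) → (Fin (κ n) → ℝ)) (hfhat : Measurable fhat)
    (hmom0 : Integrable (fun z => ∑ j, (fhat z j) ^ 2) (stdGaussian (κ 0)))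
    (hmom2 : ∀ k : Fin (κ 0),
      Integrable (fun z => (∑ j, (fhat z j) ^ 2) * |z k| ^ 2) (stdGaussian (κ 0)))
    (Θ : Set (NNParams κ n)) :
    ∀ θ ∈ Θ,
      Integrable (fun z => ‖fderiv ℝ (fun θ' => reluLoss κ n fhat θ' z) θ‖ ^ 2)
        (stdGaussian (κ 0)) := by
  intro θ _
  obtain ⟨C, hC⟩ := norm_fderiv_reluLoss_le fhat θ
  exact integrable_sq_stdGaussian_of_abs_le
    (measurable_fderiv_reluLoss hfhat θ).norm.aestronglyMeasurable hmom0 hmom2 C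
    fun z => (abs_norm _).trans_le (hC z)

/-- **Finite second moment of the gradient estimator for the ReLU network
(Theorem 2.5, item 2).**  For every `θ ∈ Θ`, `E_z[‖∇_θ f(θ,z)‖²] < ∞`, where
`∇_θ f(θ,z)` is the derivative of the loss with respect to all weights and biases for
fixed input `z` (defined for a.e. `z`). -/
theorem stmt_12 (κ : ℕ → ℕ) (n : ℕ) (hn : 1 ≤ n)
    (fhat : (Fin (κ 0) → ℝ) → (Fin (κ n) → ℝ)) (hfhat : Measurable fhat)
    (hmom0 : Integrable (fun z => ∑ j, (fhat z j) ^ 2) (stdGaussian (κ 0)))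
    (hmom1 : ∀ k : Fin (κ 0),
      Integrable (fun z => (∑ j, (fhat z j) ^ 2) * |z k|) (stdGaussian (κ 0)))
    (hmom2 : ∀ k : Fin (κ 0),
      Integrable (fun z => (∑ j, (fhat z j) ^ 2) * |z k| ^ 2) (stdGaussian (κ 0)))
    (hmom3 : ∀ k : Fin (κ 0),
      Integrable (fun z => Real.sqrt (∑ j, (fhat z j) ^ 2) * |z k| ^ 2) (stdGaussian (κ 0)))
    (hmom4 : ∀ k : Fin (κ 0),
      Integrable (fun z => (∑ j, (fhat z j) ^ 2) * |z k| ^ 3) (stdGaussian (κ 0)))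
    (Θ : Set (NNParams κ n)) (hΘb : Bornology.IsBounded Θ) (hΘc : Convex ℝ Θ)
    (hΘd : ∀ θ ∈ Θ, NonzeroPreact κ n θ) :
    ∀ θ ∈ Θ,
      Integrable (fun z => ‖fderiv ℝ (fun θ' => reluLoss κ n fhat θ' z) θ‖ ^ 2)
        (stdGaussian (κ 0)) :=
  stmt_12_general κ n fhat hfhat hmom0 hmom2 Θ
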